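/- arXiv:2012.15675 — 6 statements merged into one kernel-verified Lean document; each statement's English description precedes it below -/
import Mathlib

section
/- Let G be a connected weighted graph on a finite vertex set V with Laplacian L, let T be a nonempty proper subset of V with complement S = V ∖ T, and assume L_{SS} is positive definite, so that the Schur complement SC(L,T) is defined. Let Z be a Moore–Penrose pseudoinverse of L, and let M̂ be the V × V matrix whose T × T block equals SC(L,T) and whose remaining entries are 0. Then Σ over edges e = {u,v} of G of w(u,v) · (χ_u − χ_v)ᵀ Z M̂ Z (χ_u − χ_v) ≤ |T|. -/
open Matrix

variable {V : Type*}

/-- The Laplacian of a weighted graph. -/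
noncomputable def lap [Fintype V] [DecidableEq V] (w : V → V → ℝ) : Matrix V V ℝ :=
  Matrix.of fun u v => if u = v then ∑ z, w u z else - w u v

/-- The block of a matrix with rows selected by `P` and columns selected by `Q`. -/
def blk (M : Matrix V V ℝ) (P Q : V → Prop) : Matrix {v // P v} {v // Q v} ℝ :=
  Matrix.of fun a b => M a.1 b.1

/-- The Schur complement of `M` onto `T`. -/
noncomputable def SC [Fintype V] [DecidableEq V] (M : Matrix V V ℝ) (T : Set V)
    [DecidablePred (· ∈ T)] : Matrix {v // v ∈ T} {v // v ∈ T} ℝ :=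
  blk M (· ∈ T) (· ∈ T) -
    blk M (· ∈ T) (fun v => v ∉ T) * (blk M (fun v => v ∉ T) (fun v => v ∉ T))⁻¹ *
      blk M (fun v => v ∉ T) (· ∈ T)

/-! Write `L` for the Laplacian and `P` for the harmonic extension from `T`. Then `M̂ = L P`,
and `Q = 1 - Z L` is the orthogonal projection onto `ker L`, which `P` fixes. So the
edge sum is `tr (L Z M̂ Z) = tr (P Z L) = tr P - tr (P Q) = |T| - tr Q ≤ |T|`. -/

section Laplacian

variable [Fintype V] [DecidableEq V] {w : V → V → ℝ}

theorem lap_eq_diagonal_sub (hw_diag : ∀ u, w u u = 0) :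
    lap w = diagonal (fun u => ∑ z, w u z) - of w := by
  ext u v
  by_cases h : u = v
  · subst h; simp [lap, hw_diag]
  · simp [lap, h]

theorem trace_lap_mul (hw_symm : ∀ u v, w u v = w v u) (hw_diag : ∀ u, w u u = 0)
    (N : Matrix V V ℝ) :
    trace (lap w * N) = 1 / 2 * ∑ u, ∑ v, w u v * (N u u - N u v - N v u + N v v) := by
  have swap (f : V → V → ℝ) : ∑ u, ∑ v, w u v * f v u = ∑ u, ∑ v, w u v * f u v := by
    rw [Finset.sum_comm]
    exact Finset.sum_congr rfl fun u _ => Finset.sum_congr rfl fun v _ => by rw [hw_symm]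
  simp only [mul_add, mul_sub, Finset.sum_add_distrib, Finset.sum_sub_distrib]
  rw [swap fun u _ => N u u, swap fun u v => N u v, lap_eq_diagonal_sub hw_diag, Matrix.sub_mul,
    trace_sub, ← swap fun u v => N u v]
  simp only [trace, diag, diagonal_mul]
  simp only [mul_apply, of_apply, Finset.sum_mul]
  ring

theorem single_sub_dotProduct_mulVec (N : Matrix V V ℝ) (u v : V) :
    (Pi.single u 1 - Pi.single v 1) ⬝ᵥ N *ᵥ (Pi.single u 1 - Pi.single v 1) =
      N u u - N u v - N v u + N v v := by
  simp [mulVec_sub, sub_dotProduct, dotProduct_sub, mulVec_single]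
  ring

end Laplacian

theorem isIdempotentElem_one_sub_mul {n : Type*} [Fintype n] [DecidableEq n] {L Z : Matrix n n ℝ}
    (h : L * Z * L = L) : IsIdempotentElem (1 - Z * L) := by
  refine IsIdempotentElem.one_sub ?_
  rw [IsIdempotentElem, Matrix.mul_assoc, ← Matrix.mul_assoc L, h]

theorem trace_nonneg_of_isIdempotentElem {n : Type*} [Fintype n] {Q : Matrix n n ℝ}
    (hQ : IsIdempotentElem Q) (hQt : Qᵀ = Q) : 0 ≤ trace Q := by
  have : Qᴴ * Q = Q := by rw [conjTranspose_eq_transpose_of_trivial, hQt, hQ.eq]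
  exact this ▸ (posSemidef_conjTranspose_mul_self Q).trace_nonneg

section HarmonicExtension

variable (M : Matrix V V ℝ) (T : Set V) [DecidablePred (· ∈ T)]

theorem eq_fromBlocks_submatrix_sumCompl_symm :
    M = (fromBlocks (blk M (· ∈ T) (· ∈ T)) (blk M (· ∈ T) (· ∉ T)) (blk M (· ∉ T) (· ∈ T))
        (blk M (· ∉ T) (· ∉ T))).submatrix (Equiv.sumCompl (· ∈ T)).symm
          (Equiv.sumCompl (· ∈ T)).symm := by
  ext a b
  by_cases ha : a ∈ T <;> by_cases hb : b ∈ T <;> simp [ha, hb, blk]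

theorem fromBlocks_zero_submatrix_sumCompl_symm (A : Matrix {v // v ∈ T} {v // v ∈ T} ℝ) :
    (fromBlocks A 0 0 0).submatrix (Equiv.sumCompl (· ∈ T)).symm (Equiv.sumCompl (· ∈ T)).symm =
      of fun a b => if ha : a ∈ T then if hb : b ∈ T then A ⟨a, ha⟩ ⟨b, hb⟩ else 0 else 0 := by
  ext a b
  by_cases ha : a ∈ T <;> by_cases hb : b ∈ T <;> simp [ha, hb]

variable [Fintype V] [DecidableEq V]

/-- `harmonicExt M T *ᵥ x` agrees with `x` on `T` and is chosen on `Tᶜ` so that `M` maps it to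
a vector vanishing on `Tᶜ`. -/
noncomputable def harmonicExt : Matrix V V ℝ :=
  (fromBlocks 1 0 (-((blk M (· ∉ T) (· ∉ T))⁻¹ * blk M (· ∉ T) (· ∈ T))) 0).submatrix
    (Equiv.sumCompl (· ∈ T)).symm (Equiv.sumCompl (· ∈ T)).symm

theorem trace_harmonicExt : trace (harmonicExt M T) = Fintype.card {v // v ∈ T} := by
  simp [harmonicExt, trace, ← Equiv.sum_comp (Equiv.sumCompl (· ∈ T)), Fintype.sum_sum_type]

variable {M T}

theorem mul_harmonicExt (hD : IsUnit (blk M (· ∉ T) (· ∉ T)).det) :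
    M * harmonicExt M T =
      (fromBlocks (SC M T) 0 0 0).submatrix (Equiv.sumCompl (· ∈ T)).symm
        (Equiv.sumCompl (· ∈ T)).symm := by
  rw [harmonicExt]
  nth_rw 1 [eq_fromBlocks_submatrix_sumCompl_symm M T]
  rw [submatrix_mul_equiv, fromBlocks_multiply]
  simp [SC, mul_nonsing_inv_cancel_left _ _ hD, Matrix.mul_assoc, sub_eq_add_neg]

theorem harmonicExt_mul_of_mul_eq_zero {ι : Type*} (hD : IsUnit (blk M (· ∉ T) (· ∉ T)).det)
    {Q : Matrix V ι ℝ} (hQ : M * Q = 0) : harmonicExt M T * Q = Q := by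
  set Q₁ : Matrix {v // v ∈ T} ι ℝ := Q.submatrix Subtype.val id
  set Q₂ : Matrix {v // v ∉ T} ι ℝ := Q.submatrix Subtype.val id
  have hQ_eq : Q = (fromRows Q₁ Q₂).submatrix (Equiv.sumCompl (· ∈ T)).symm id := by
    ext a b
    by_cases ha : a ∈ T <;> simp [ha, Q₁, Q₂]
  have hQ₂ : blk M (· ∉ T) (· ∈ T) * Q₁ + blk M (· ∉ T) (· ∉ T) * Q₂ = 0 := by
    rw [hQ_eq, eq_fromBlocks_submatrix_sumCompl_symm M T, submatrix_mul_equiv,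
      fromBlocks_mul_fromRows] at hQ
    ext s j
    simpa using congr_fun₂ hQ s.1 j
  have hX : -((blk M (· ∉ T) (· ∉ T))⁻¹ * blk M (· ∉ T) (· ∈ T)) * Q₁ = Q₂ := by
    rw [Matrix.neg_mul, Matrix.mul_assoc, eq_neg_of_add_eq_zero_left hQ₂, Matrix.mul_neg, neg_neg,
      nonsing_inv_mul_cancel_left _ _ hD]
  rw [harmonicExt, hQ_eq, submatrix_mul_equiv, fromBlocks_mul_fromRows, hX]
  simp

end HarmonicExtension

-- Each edge `{u, v}` occurs twice in the double sum, as `(u, v)` and as `(v, u)`.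
theorem sum_induced_leverage_le_card_general
    [Fintype V] [DecidableEq V]
    (w : V → V → ℝ) (hw_symm : ∀ u v, w u v = w v u)
    (hw_diag : ∀ u, w u u = 0)
    (T : Set V) [DecidablePred (· ∈ T)]
    (hSS : (blk (lap w) (fun v => v ∉ T) (fun v => v ∉ T)).PosDef)
    (Z : Matrix V V ℝ)
    (hZ1 : lap w * Z * lap w = lap w)
    (hZ4 : (Z * lap w)ᵀ = Z * lap w)
    (Mhat : Matrix V V ℝ)
    (hMhat : Mhat = Matrix.of fun a b =>
      if ha : a ∈ T then if hb : b ∈ T then SC (lap w) T ⟨a, ha⟩ ⟨b, hb⟩ else 0 else 0) :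
    (1 / 2) * ∑ u, ∑ v, w u v *
        ((Pi.single u 1 - Pi.single v 1) ⬝ᵥ
          (Z * Mhat * Z).mulVec (Pi.single u 1 - Pi.single v 1)) ≤
      (Fintype.card {v // v ∈ T} : ℝ) := by
  have hdet : IsUnit (blk (lap w) (· ∉ T) (· ∉ T)).det := (isUnit_iff_isUnit_det _).mp hSS.isUnit
  set P := harmonicExt (lap w) T
  set Q := 1 - Z * lap w
  have hMhat_eq : Mhat = lap w * P := by
    rw [hMhat, mul_harmonicExt hdet, fromBlocks_zero_submatrix_sumCompl_symm]
  have hLQ : lap w * Q = 0 := by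
    rw [Matrix.mul_sub, Matrix.mul_one, ← Matrix.mul_assoc, hZ1, sub_self]
  have hPQ : P * Q = Q := harmonicExt_mul_of_mul_eq_zero hdet hLQ
  have hQ : 0 ≤ trace Q := trace_nonneg_of_isIdempotentElem (isIdempotentElem_one_sub_mul hZ1)
    (by rw [transpose_sub, transpose_one, hZ4])
  simp_rw [single_sub_dotProduct_mulVec, ← trace_lap_mul hw_symm hw_diag]
  calc trace (lap w * (Z * Mhat * Z)) = trace (lap w * Z * lap w * (P * Z)) := by
        rw [hMhat_eq]; noncomm_ring
    _ = trace (P * (Z * lap w)) := by rw [hZ1, trace_mul_comm, Matrix.mul_assoc]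
    _ = trace P - trace Q := by
        rw [← sub_sub_cancel 1 (Z * lap w), Matrix.mul_sub, Matrix.mul_one, hPQ, trace_sub]
    _ ≤ Fintype.card {v // v ∈ T} := by
        rw [trace_harmonicExt]
        linarith

/-- Sum over the edges `{u,v}` (each counted once, since `w` is symmetric and each
ordered pair is counted twice) of the induced leverage score on the Schur complement
is at most `|T|`. -/
theorem sum_induced_leverage_le_card
    [Fintype V] [DecidableEq V]
    (w : V → V → ℝ) (hw_symm : ∀ u v, w u v = w v u) (hw_nonneg : ∀ u v, 0 ≤ w u v)
    (hw_diag : ∀ u, w u u = 0)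
    (hconn : (SimpleGraph.fromRel fun u v => 0 < w u v).Connected)
    (T : Set V) [DecidablePred (· ∈ T)] (hT_ne : T.Nonempty) (hT_proper : T ≠ Set.univ)
    (hSS : (blk (lap w) (fun v => v ∉ T) (fun v => v ∉ T)).PosDef)
    (Z : Matrix V V ℝ)
    (hZ1 : lap w * Z * lap w = lap w) (hZ2 : Z * lap w * Z = Z)
    (hZ3 : (lap w * Z)ᵀ = lap w * Z) (hZ4 : (Z * lap w)ᵀ = Z * lap w)
    (Mhat : Matrix V V ℝ)
    (hMhat : Mhat = Matrix.of fun a b =>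
      if ha : a ∈ T then if hb : b ∈ T then SC (lap w) T ⟨a, ha⟩ ⟨b, hb⟩ else 0 else 0) :
    (1 / 2) * ∑ u, ∑ v, w u v *
        ((Pi.single u 1 - Pi.single v 1) ⬝ᵥ
          (Z * Mhat * Z).mulVec (Pi.single u 1 - Pi.single v 1)) ≤
      (Fintype.card {v // v ∈ T} : ℝ) :=
  sum_induced_leverage_le_card_general w hw_symm hw_diag T hSS Z hZ1 hZ4 Mhat hMhat
end

section
/- Let M = X + Y be a real n × n matrix, where X is diagonal with nonnegative entries and Y is symmetric with nonpositive off-diagonal entries and zero row sums (i.e. Y is the Laplacian of a weighted graph). If M is α-diagonally dominant for some α ≥ 0, then (α/2)·Y ⪯ X in the Loewner order. -/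
open Matrix

/-- `M` is α-diagonally dominant. -/
def IsAlphaDD {n : Type*} [Fintype n] [DecidableEq n] (α : ℝ) (M : Matrix n n ℝ) : Prop :=
  ∀ i, (1 + α) * ∑ j ∈ Finset.univ.erase i, |M i j| ≤ M i i

/-!
For the Laplacian `Y` each off-diagonal absolute row sum equals the diagonal entry `Y i i`, so
`α`-dominance of `X + Y` reads `α * Y i i ≤ X i i`. Hence `X - (α / 2) • Y` is a
symmetric matrix whose diagonal entries `X i i - (α / 2) * Y i i` are at least
`(α / 2) * Y i i`, the off-diagonal absolute row sums: it is weakly diagonally dominant with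
nonnegative diagonal, and Gershgorin's theorem puts its eigenvalues in `[0, ∞)`.
-/

open Finset

namespace Matrix

variable {n : Type*} [Fintype n] [DecidableEq n]

theorem IsSymm.posSemidef_of_sum_abs_le_diag {A : Matrix n n ℝ} (hA : A.IsSymm)
    (hdom : ∀ i, ∑ j ∈ univ.erase i, |A i j| ≤ A i i) : A.PosSemidef := by
  have hH : A.IsHermitian := by
    rwa [IsHermitian, conjTranspose_eq_transpose_of_trivial]
  refine hH.posSemidef_iff_eigenvalues_nonneg.mpr fun i => ?_
  show 0 ≤ hH.eigenvalues i
  have hμ : Module.End.HasEigenvalue (toLin' A) (hH.eigenvalues i) :=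
    .of_mem_spectrum (by rw [spectrum_toLin']; exact hH.eigenvalues_mem_spectrum_real i)
  obtain ⟨k, hk⟩ := eigenvalue_mem_ball hμ
  simp only [Metric.mem_closedBall, Real.dist_eq, Real.norm_eq_abs] at hk
  linarith [(abs_le.mp hk).1, hdom k]

theorem sum_erase_abs_eq_diag_of_rowSum_eq_zero {Y : Matrix n n ℝ}
    (hoff : ∀ i j, i ≠ j → Y i j ≤ 0) (hrow : ∀ i, ∑ j, Y i j = 0) (i : n) :
    ∑ j ∈ univ.erase i, |Y i j| = Y i i := by
  have hsplit := add_sum_erase univ (Y i) (mem_univ i)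
  rw [hrow i] at hsplit
  rw [sum_congr rfl fun j hj => abs_of_nonpos (hoff i j (ne_of_mem_erase hj).symm),
    sum_neg_distrib]
  linarith

end Matrix

theorem IsAlphaDD.mul_diag_le_of_add {n : Type*} [Fintype n] [DecidableEq n] {α : ℝ}
    {X Y : Matrix n n ℝ} (hX : X.IsDiag) (hDD : IsAlphaDD α (X + Y))
    (hY : ∀ i, ∑ j ∈ univ.erase i, |Y i j| = Y i i) (i : n) :
    α * Y i i ≤ X i i := by
  have hoff : ∑ j ∈ univ.erase i, |(X + Y) i j| = Y i i := by
    rw [← hY i]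
    refine sum_congr rfl fun j hj => ?_
    rw [Matrix.add_apply, hX (ne_of_mem_erase hj).symm, zero_add]
  have h := hDD i
  rw [hoff, Matrix.add_apply] at h
  linarith

theorem alphaDD_diagonal_dominates_laplacian_part_general {n : Type*} [Fintype n] [DecidableEq n]
    (X Y M : Matrix n n ℝ) (hM : M = X + Y)
    (hX_diag : X.IsDiag)
    (hY_symm : Y.IsSymm) (hY_offdiag : ∀ i j, i ≠ j → Y i j ≤ 0)
    (hY_rowsum : ∀ i, ∑ j, Y i j = 0)
    (α : ℝ) (hα : 0 ≤ α) (hDD : IsAlphaDD α M) :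
    (X - (α / 2) • Y).PosSemidef := by
  subst hM
  have hY := sum_erase_abs_eq_diag_of_rowSum_eq_zero hY_offdiag hY_rowsum
  refine (hX_diag.isSymm.sub (hY_symm.smul _)).posSemidef_of_sum_abs_le_diag fun i => ?_
  have hoff : ∑ j ∈ univ.erase i, |(X - (α / 2) • Y) i j| = α / 2 * Y i i := by
    rw [← hY i, mul_sum]
    refine sum_congr rfl fun j hj => ?_
    rw [Matrix.sub_apply, Matrix.smul_apply, hX_diag (ne_of_mem_erase hj).symm, zero_sub, abs_neg,
      smul_eq_mul, abs_mul, abs_of_nonneg (by positivity : 0 ≤ α / 2)]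
  rw [hoff, Matrix.sub_apply, Matrix.smul_apply, smul_eq_mul]
  linarith [hDD.mul_diag_le_of_add hX_diag hY i]

theorem alphaDD_diagonal_dominates_laplacian_part {n : Type*} [Fintype n] [DecidableEq n]
    (X Y M : Matrix n n ℝ) (hM : M = X + Y)
    (hX_diag : X.IsDiag) (hX_nonneg : ∀ i, 0 ≤ X i i)
    (hY_symm : Y.IsSymm) (hY_offdiag : ∀ i j, i ≠ j → Y i j ≤ 0)
    (hY_rowsum : ∀ i, ∑ j, Y i j = 0)
    (α : ℝ) (hα : 0 ≤ α) (hDD : IsAlphaDD α M) :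
    (X - (α / 2) • Y).PosSemidef :=
  alphaDD_diagonal_dominates_laplacian_part_general X Y M hM hX_diag hY_symm hY_offdiag hY_rowsum α
    hα hDD
end

section
/- Let X be a positive-definite diagonal real n × n matrix and let Y be a symmetric positive-semidefinite real n × n matrix with Y ⪯ β·X for some 0 < β < 1. Then for every odd positive integer k, the matrix Z^{(k)} := Σ_{i=0}^{k} X^{-1} (−Y X^{-1})^{i} is invertible and X + Y ⪯ (Z^{(k)})^{-1} ⪯ X + (1+δ)·Y in the Loewner order, where δ = β^{k} (1+β)/(1 − β^{k+1}). -/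
/-!
Write `X = R * R` with `R` strictly positive and put `S = R⁻¹ Y R⁻¹`, so that `0 ≤ S ≤ β`.
Conjugation by `R` gives `Z⁽ᵏ⁾ = R⁻¹ p(S) R⁻¹` with `p(t) = ∑_{i ≤ k} (-t)^i`, and since `k`
is odd, `(1 + t) p(t) = 1 - t^(k+1)`. Hence `(Z⁽ᵏ⁾)⁻¹ = R q(S) R` with
`q(t) = (1 + t) / (1 - t^(k+1))`, and by the continuous functional calculus both bounds reduce
to the scalar inequalities `1 + t ≤ q(t) ≤ 1 + (1 + δ) t` for `t ∈ [0, β]`.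
-/

open Finset
open scoped Ring

section Scalar

variable {k : ℕ} {t β : ℝ}

lemma one_add_mul_geom_sum_neg (hk : Odd k) (t : ℝ) :
    (1 + t) * ∑ i ∈ range (k + 1), (-t) ^ i = 1 - t ^ (k + 1) := by
  simpa [hk.add_one.neg_pow] using mul_neg_geom_sum (-t) (k + 1)

lemma one_sub_pow_succ_pos (ht0 : 0 ≤ t) (ht1 : t < 1) : 0 < 1 - t ^ (k + 1) :=
  sub_pos.2 (pow_lt_one₀ ht0 ht1 k.succ_ne_zero)

lemma inv_geom_sum_neg_eq_div (hk : Odd k) (ht0 : 0 ≤ t) :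
    (∑ i ∈ range (k + 1), (-t) ^ i)⁻¹ = (1 + t) / (1 - t ^ (k + 1)) := by
  rw [← one_add_mul_geom_sum_neg hk, div_mul_cancel_left₀ (by positivity)]

lemma one_add_le_div_one_sub_pow (ht0 : 0 ≤ t) (ht1 : t < 1) :
    1 + t ≤ (1 + t) / (1 - t ^ (k + 1)) :=
  le_div_self (by positivity) (one_sub_pow_succ_pos ht0 ht1) (by linarith [pow_nonneg ht0 (k + 1)])

lemma div_one_sub_pow_le_one_add_mul (ht0 : 0 ≤ t) (htβ : t ≤ β) (hβ1 : β < 1) :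
    (1 + t) / (1 - t ^ (k + 1)) ≤ 1 + (1 + β ^ k * (1 + β) / (1 - β ^ (k + 1))) * t := by
  set δ := β ^ k * (1 + β) / (1 - β ^ (k + 1))
  have hβ : 0 < 1 - β ^ (k + 1) := one_sub_pow_succ_pos (ht0.trans htβ) hβ1
  have hδ0 : 0 ≤ δ := by have := ht0.trans htβ; positivity
  -- `δ` is chosen so that the bound is an equality at `t = β`.
  have hδ : β ^ k * (1 + (1 + δ) * β) = δ := by
    simp only [δ]; field_simp; ring
  have hmono : t ^ k * (1 + (1 + δ) * t) ≤ δ :=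
    (mul_le_mul (pow_le_pow_left₀ ht0 htβ k) (by gcongr) (by nlinarith)
      (pow_nonneg (ht0.trans htβ) k)).trans hδ.le
  rw [div_le_iff₀ (one_sub_pow_succ_pos ht0 (htβ.trans_lt hβ1)), pow_succ]
  nlinarith [mul_le_mul_of_nonneg_left hmono ht0]

end Scalar

lemma sum_inverse_mul_neg_mul_inverse_pow_eq_conj {R : Type*} [Ring R] (u : Rˣ) (Y : R) (m : ℕ) :
    ∑ i ∈ range m, ((u : R) * u)⁻¹ʳ * (-(Y * ((u : R) * u)⁻¹ʳ)) ^ i =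
      ↑u⁻¹ * (∑ i ∈ range m, (-(↑u⁻¹ * Y * ↑u⁻¹)) ^ i) * ↑u⁻¹ := by
  have hinv : ((u : R) * u)⁻¹ʳ = ↑u⁻¹ * ↑u⁻¹ := by
    rw [← Units.val_mul, Ring.inverse_unit, mul_inv_rev]; rfl
  have hconj : -(Y * ((u : R) * u)⁻¹ʳ) = ↑u * (-(↑u⁻¹ * Y * ↑u⁻¹)) * ↑u⁻¹ := by
    simp [hinv, ← mul_assoc]
  rw [Finset.mul_sum, Finset.sum_mul]
  refine sum_congr rfl fun i _ ↦ ?_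
  rw [hconj, Units.conj_pow, hinv]
  simp [← mul_assoc]

section FunctionalCalculus

variable {A : Type*} [Ring A] [StarRing A] [TopologicalSpace A] [Algebra ℝ A]
  [ContinuousFunctionalCalculus ℝ A IsSelfAdjoint]

lemma geom_sum_neg_eq_cfc {S : A} (hS : IsSelfAdjoint S) (m : ℕ) :
    ∑ i ∈ range m, (-S) ^ i = cfc (fun t : ℝ ↦ ∑ i ∈ range m, (-t) ^ i) S := by
  simpa [Polynomial.eval_finsetSum] using
    (cfc_polynomial (∑ i ∈ range m, (-Polynomial.X : Polynomial ℝ) ^ i) S).symm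

variable [PartialOrder A] [StarOrderedRing A] [NonnegSpectrumClass ℝ A]

theorem exists_unit_geom_sum_neg_inv_bounds {k : ℕ} (hk : Odd k) {β : ℝ} (hβ1 : β < 1)
    {S : A} (hS0 : 0 ≤ S) (hSβ : S ≤ algebraMap ℝ A β) :
    ∃ w : Aˣ, (w : A) = ∑ i ∈ range (k + 1), (-S) ^ i ∧ 1 + S ≤ ↑w⁻¹ ∧
      ↑w⁻¹ ≤ 1 + (1 + β ^ k * (1 + β) / (1 - β ^ (k + 1))) • S := by
  have hS : IsSelfAdjoint S := .of_nonneg hS0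
  have hspec : ∀ t ∈ spectrum ℝ S, 0 ≤ t ∧ t ≤ β := fun t ht ↦
    ⟨(StarOrderedRing.nonneg_iff_spectrum_nonneg S).1 hS0 t ht,
      (le_algebraMap_iff_spectrum_le).1 hSβ t ht⟩
  have hinv : ∀ t ∈ spectrum ℝ S,
      (∑ i ∈ range (k + 1), (-t) ^ i)⁻¹ = (1 + t) / (1 - t ^ (k + 1)) := fun t ht ↦
    inv_geom_sum_neg_eq_div hk (hspec t ht).1
  have hne : ∀ t ∈ spectrum ℝ S, ∑ i ∈ range (k + 1), (-t) ^ i ≠ 0 := fun t ht h ↦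
    (one_sub_pow_succ_pos (hspec t ht).1 ((hspec t ht).2.trans_lt hβ1)).ne'
      (by rw [← one_add_mul_geom_sum_neg hk, h, mul_zero])
  have hcont : ContinuousOn (fun t : ℝ ↦ (1 + t) / (1 - t ^ (k + 1))) (spectrum ℝ S) :=
    ContinuousOn.div (by fun_prop) (by fun_prop) fun t ht ↦
      (one_sub_pow_succ_pos (hspec t ht).1 ((hspec t ht).2.trans_lt hβ1)).ne'
  set w := cfcUnits _ S hne
  have hw_inv : (↑w⁻¹ : A) = cfc (fun t : ℝ ↦ (1 + t) / (1 - t ^ (k + 1))) S :=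
    (val_inv_cfcUnits _ S hne).trans (cfc_congr hinv)
  refine ⟨w, (geom_sum_neg_eq_cfc hS _).symm, ?_, ?_⟩ <;> rw [hw_inv]
  · calc 1 + S = cfc (fun t : ℝ ↦ 1 + t) S := by rw [cfc_const_add _ _ S, cfc_id' ℝ S]; simp
      _ ≤ _ := cfc_mono (fun t ht ↦ one_add_le_div_one_sub_pow (hspec t ht).1
          ((hspec t ht).2.trans_lt hβ1)) (hg := hcont)
  · calc _ ≤ cfc (fun t : ℝ ↦ 1 + (1 + β ^ k * (1 + β) / (1 - β ^ (k + 1))) * t) S :=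
          cfc_mono (fun t ht ↦
            div_one_sub_pow_le_one_add_mul (hspec t ht).1 (hspec t ht).2 hβ1) hcont
      _ = _ := by rw [cfc_const_add _ _ S, cfc_const_mul_id _ S]; simp

variable [IsSemitopologicalRing A] [T2Space A]

theorem exists_unit_truncated_neumann_sum_inv_bounds {X Y : A} (hX : IsStrictlyPositive X)
    (hY : 0 ≤ Y) {β : ℝ} (hβ1 : β < 1) (hYX : Y ≤ β • X) {k : ℕ} (hk : Odd k) :
    ∃ z : Aˣ, (z : A) = ∑ i ∈ range (k + 1), X⁻¹ʳ * (-(Y * X⁻¹ʳ)) ^ i ∧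
      X + Y ≤ ↑z⁻¹ ∧
      ↑z⁻¹ ≤ X + (1 + β ^ k * (1 + β) / (1 - β ^ (k + 1))) • Y := by
  obtain ⟨R, hR, rfl⟩ :=
    CStarAlgebra.isStrictlyPositive_iff_exists_isStrictlyPositive_and_eq_mul_self.1 hX
  set u := hR.isUnit.unit
  have hRu : R = u := hR.isUnit.unit_spec.symm
  have hu : IsSelfAdjoint (u : A) := hRu ▸ hR.isSelfAdjoint
  have hu_inv : IsSelfAdjoint (↑u⁻¹ : A) := by
    simpa only [Ring.inverse_unit] using hu.ringInverse
  have hcongr : ∀ a : A, ↑u * (↑u⁻¹ * a * ↑u⁻¹) * ↑u = a := fun a ↦ by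
    simp [← mul_assoc]
  set S := ↑u⁻¹ * Y * ↑u⁻¹
  have hSβ : S ≤ algebraMap ℝ A β := calc
    S ≤ ↑u⁻¹ * (β • (R * R)) * ↑u⁻¹ := hu_inv.conjugate_le_conjugate hYX
    _ = algebraMap ℝ A β := by simp [hRu, Algebra.algebraMap_eq_smul_one]
  obtain ⟨w, hw, hlow, hup⟩ :=
    exists_unit_geom_sum_neg_inv_bounds hk hβ1 (hu_inv.conjugate_nonneg hY) hSβ
  refine ⟨u⁻¹ * w * u⁻¹, ?_, ?_, ?_⟩
  · rw [hRu, sum_inverse_mul_neg_mul_inverse_pow_eq_conj, ← hw]; simp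
  · have := hu.conjugate_le_conjugate hlow
    simpa [mul_add, add_mul, hcongr, hRu, mul_assoc] using this
  · have := hu.conjugate_le_conjugate hup
    simpa [mul_add, add_mul, hcongr, hRu, mul_assoc] using this

end FunctionalCalculus

open Matrix

theorem jacobi_operator_bounds_general {n : Type*} [Fintype n] [DecidableEq n]
    (X Y : Matrix n n ℝ) (hX : X.PosDef)
    (hY : Y.PosSemidef) (β : ℝ) (hβ1 : β < 1)
    (hYX : (β • X - Y).PosSemidef)
    (k : ℕ) (hk_odd : Odd k) :
    IsUnit (∑ i ∈ Finset.range (k + 1), X⁻¹ * (-(Y * X⁻¹)) ^ i) ∧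
    ((∑ i ∈ Finset.range (k + 1), X⁻¹ * (-(Y * X⁻¹)) ^ i)⁻¹ - (X + Y)).PosSemidef ∧
    (X + (1 + β ^ k * (1 + β) / (1 - β ^ (k + 1))) • Y -
        (∑ i ∈ Finset.range (k + 1), X⁻¹ * (-(Y * X⁻¹)) ^ i)⁻¹).PosSemidef := by
  open scoped MatrixOrder in
  obtain ⟨z, hz, hlow, hup⟩ := exists_unit_truncated_neumann_sum_inv_bounds
    hX.isStrictlyPositive hY.nonneg hβ1 (le_iff.2 hYX) hk_odd
  simp only [nonsing_inv_eq_ringInverse, ← hz, Ring.inverse_unit]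
  exact ⟨z.isUnit, hlow, hup⟩

theorem jacobi_operator_bounds {n : Type*} [Fintype n] [DecidableEq n]
    (X Y : Matrix n n ℝ) (hX : X.PosDef) (hX_diag : X.IsDiag)
    (hY : Y.PosSemidef) (β : ℝ) (hβ0 : 0 < β) (hβ1 : β < 1)
    (hYX : (β • X - Y).PosSemidef)
    (k : ℕ) (hk_odd : Odd k) (hk_pos : 0 < k) :
    IsUnit (∑ i ∈ Finset.range (k + 1), X⁻¹ * (-(Y * X⁻¹)) ^ i) ∧
    ((∑ i ∈ Finset.range (k + 1), X⁻¹ * (-(Y * X⁻¹)) ^ i)⁻¹ - (X + Y)).PosSemidef ∧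
    (X + (1 + β ^ k * (1 + β) / (1 - β ^ (k + 1))) • Y -
        (∑ i ∈ Finset.range (k + 1), X⁻¹ * (-(Y * X⁻¹)) ^ i)⁻¹).PosSemidef :=
  jacobi_operator_bounds_general X Y hX hY β hβ1 hYX k hk_odd
end

section
/- Let A and B be real symmetric matrices indexed by V × V with A ⪯ B in the Loewner order, let T ⊆ V with complement S = V ∖ T, and assume both principal submatrices A_{SS} and B_{SS} are positive definite. Then SC(A,T) ⪯ SC(B,T) in the Loewner order. -/
/-!
A Schur complement is the minimum of a quadratic form over the eliminated coordinates: for a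
Hermitian block matrix `M = [A B; Bᴴ D]` with `D` invertible,
`xᴴ (A - B D⁻¹ Bᴴ) x = (x, y)ᴴ M (x, y) - (y + D⁻¹ Bᴴ x)ᴴ D (y + D⁻¹ Bᴴ x)`.
If `D` is positive semidefinite this is at most `(x, y)ᴴ M (x, y)` for every `y`, with equality
at `y = -D⁻¹ Bᴴ x` whatever the sign of `D`. Evaluating at the minimiser `y` for `M₂ ⪰ M₁` gives
`xᴴ SC(M₁) x ≤ (x, y)ᴴ M₁ (x, y) ≤ (x, y)ᴴ M₂ (x, y) = xᴴ SC(M₂) x`.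
-/

open Matrix

variable {V : Type*}

namespace Matrix

variable {m n R : Type*} [Fintype m] [Fintype n] [DecidableEq n] [CommRing R] [StarRing R]

theorem dotProduct_mulVec_schur₂₂_eq (A : Matrix m m R) (B : Matrix m n R) {D : Matrix n n R}
    [Invertible D] (hD : D.IsHermitian) (x : m → R) :
    star x ⬝ᵥ ((A - B * D⁻¹ * Bᴴ) *ᵥ x) =
      star (x ⊕ᵥ -((D⁻¹ * Bᴴ) *ᵥ x)) ⬝ᵥ
        (fromBlocks A B Bᴴ D *ᵥ (x ⊕ᵥ -((D⁻¹ * Bᴴ) *ᵥ x))) := by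
  rw [dotProduct_mulVec, dotProduct_mulVec, schur_complement_eq₂₂ A B _ _ hD, add_neg_cancel,
    dotProduct_zero, zero_add]

variable [PartialOrder R] [StarOrderedRing R]

theorem dotProduct_mulVec_schur₂₂_le (A : Matrix m m R) (B : Matrix m n R) {D : Matrix n n R}
    [Invertible D] (hD : D.PosSemidef) (x : m → R) (y : n → R) :
    star x ⬝ᵥ ((A - B * D⁻¹ * Bᴴ) *ᵥ x) ≤
      star (x ⊕ᵥ y) ⬝ᵥ (fromBlocks A B Bᴴ D *ᵥ (x ⊕ᵥ y)) := by
  rw [dotProduct_mulVec, dotProduct_mulVec, schur_complement_eq₂₂ A B x y hD.1]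
  exact le_add_of_nonneg_left
    (by simpa only [dotProduct_mulVec] using hD.dotProduct_mulVec_nonneg _)

theorem PosSemidef.sub_schur₂₂ {A₁ A₂ : Matrix m m R} {B₁ B₂ : Matrix m n R}
    {D₁ D₂ : Matrix n n R} [Invertible D₁] [Invertible D₂]
    (h : (fromBlocks A₂ B₂ B₂ᴴ D₂ - fromBlocks A₁ B₁ B₁ᴴ D₁).PosSemidef)
    (hD₁ : D₁.PosSemidef) (hD₂ : D₂.IsHermitian) :
    ((A₂ - B₂ * D₂⁻¹ * B₂ᴴ) - (A₁ - B₁ * D₁⁻¹ * B₁ᴴ)).PosSemidef := by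
  have hA : (A₂ - A₁).IsHermitian := h.1.submatrix Sum.inl
  refine .of_dotProduct_mulVec_nonneg ?_ fun x => ?_
  · rw [show A₂ - B₂ * D₂⁻¹ * B₂ᴴ - (A₁ - B₁ * D₁⁻¹ * B₁ᴴ) =
        A₂ - A₁ - B₂ * D₂⁻¹ * B₂ᴴ + B₁ * D₁⁻¹ * B₁ᴴ by abel]
    exact (hA.sub (isHermitian_mul_mul_conjTranspose _ hD₂.inv)).add
      (isHermitian_mul_mul_conjTranspose _ hD₁.1.inv)
  · set y := -((D₂⁻¹ * B₂ᴴ) *ᵥ x)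
    have hM := h.dotProduct_mulVec_nonneg (x ⊕ᵥ y)
    rw [sub_mulVec, dotProduct_sub, sub_nonneg] at hM
    rw [sub_mulVec, dotProduct_sub, sub_nonneg, dotProduct_mulVec_schur₂₂_eq A₂ B₂ hD₂]
    exact (dotProduct_mulVec_schur₂₂_le A₁ B₁ hD₁ x y).trans hM

end Matrix

section Blocks

variable {M : Matrix V V ℝ}

theorem blk_conjTranspose (hM : M.IsSymm) (P Q : V → Prop) : (blk M P Q)ᴴ = blk M Q P := by
  ext a b
  exact hM.apply a.1 b.1

theorem submatrix_sumCompl_eq_fromBlocks (hM : M.IsSymm) (p : V → Prop) [DecidablePred p] :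
    M.submatrix (Equiv.sumCompl p) (Equiv.sumCompl p) =
      fromBlocks (blk M p p) (blk M p (¬p ·)) (blk M p (¬p ·))ᴴ (blk M (¬p ·) (¬p ·)) := by
  rw [blk_conjTranspose hM]
  ext (i | i) (j | j) <;> rfl

theorem SC_eq_sub_mul_inv_mul_conjTranspose [Fintype V] [DecidableEq V] (hM : M.IsSymm)
    (T : Set V) [DecidablePred (· ∈ T)] :
    SC M T = blk M (· ∈ T) (· ∈ T) - blk M (· ∈ T) (· ∉ T) *
      (blk M (· ∉ T) (· ∉ T))⁻¹ * (blk M (· ∈ T) (· ∉ T))ᴴ := by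
  rw [SC, blk_conjTranspose hM]

end Blocks

theorem schur_complement_monotone [Fintype V] [DecidableEq V]
    (A B : Matrix V V ℝ) (hA : A.IsSymm) (hB : B.IsSymm)
    (hAB : (B - A).PosSemidef)
    (T : Set V) [DecidablePred (· ∈ T)]
    (hASS : (blk A (fun v => v ∉ T) (fun v => v ∉ T)).PosDef)
    (hBSS : (blk B (fun v => v ∉ T) (fun v => v ∉ T)).PosDef) :
    (SC B T - SC A T).PosSemidef := by
  let e := Equiv.sumCompl (· ∈ T)
  have := hASS.isUnit.invertible
  have := hBSS.isUnit.invertible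
  have hblocks : (B.submatrix e e - A.submatrix e e).PosSemidef := hAB.submatrix e
  rw [submatrix_sumCompl_eq_fromBlocks hA, submatrix_sumCompl_eq_fromBlocks hB] at hblocks
  rw [SC_eq_sub_mul_inv_mul_conjTranspose hA, SC_eq_sub_mul_inv_mul_conjTranspose hB]
  exact hblocks.sub_schur₂₂ hASS.posSemidef hBSS.1
end

section
/- Let G be a connected weighted graph on a finite vertex set V with Laplacian L, let T be a nonempty proper subset of V with complement S = V ∖ T, and assume L_{SS} is positive definite, so that SC(L,T) is defined. Let Z be a Moore–Penrose pseudoinverse of L. Then SC(L,T) · Z_{[T,T]} · SC(L,T) = SC(L,T), where Z_{[T,T]} denotes the T × T principal submatrix of Z. -/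
open Matrix

variable {V : Type*}

/-!
Write `M = [A B; C D]` with `D` invertible and `S = A - B D⁻¹ C`. Eliminating with
`Y = [1, -B D⁻¹]` and `X = [1; -D⁻¹ C]` gives `Y M = [S, 0]` and `M X = [S; 0]`, hence for any
`Z` with `M Z M = M`, `S Z₁₁ S = Y M Z M X = Y M X = S`.
-/

namespace Matrix

variable {l m n R : Type*} [Fintype n] [CommRing R]
  {A : Matrix l m R} {B : Matrix l n R} {C : Matrix n m R} {D : Matrix n n R}

theorem fromCols_zero_mul_mul_fromRows_zero {k k' n' : Type*} [Fintype l] [Fintype m]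
    [Fintype n'] (P : Matrix k m R) (Z : Matrix (m ⊕ n) (l ⊕ n') R) (Q : Matrix l k' R) :
    fromCols P (0 : Matrix k n R) * Z * fromRows Q (0 : Matrix n' k' R) =
      P * Z.toBlocks₁₁ * Q := by
  conv_lhs => rw [← fromBlocks_toBlocks Z]
  rw [fromCols_mul_fromBlocks, fromCols_mul_fromRows]
  simp

variable [DecidableEq n]

theorem fromCols_one_neg_mul_fromBlocks [Fintype l] [DecidableEq l] (hD : IsUnit D.det) :
    fromCols (1 : Matrix l l R) (-(B * D⁻¹)) * fromBlocks A B C D =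
      fromCols (A - B * D⁻¹ * C) (0 : Matrix l n R) := by
  simp [fromCols_mul_fromBlocks, nonsing_inv_mul_cancel_right D _ hD, sub_eq_add_neg]

theorem fromBlocks_mul_fromRows_one_neg [Fintype m] [DecidableEq m] (hD : IsUnit D.det) :
    fromBlocks A B C D * fromRows (1 : Matrix m m R) (-(D⁻¹ * C)) =
      fromRows (A - B * D⁻¹ * C) (0 : Matrix n m R) := by
  simp [fromBlocks_mul_fromRows, mul_nonsing_inv_cancel_left D _ hD, sub_eq_add_neg,
    Matrix.mul_assoc]

theorem schur_mul_toBlocks₁₁_mul_schur [Fintype l] [Fintype m] [DecidableEq l] [DecidableEq m]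
    (hD : IsUnit D.det) {Z : Matrix (m ⊕ n) (l ⊕ n) R}
    (hZ : fromBlocks A B C D * Z * fromBlocks A B C D = fromBlocks A B C D) :
    (A - B * D⁻¹ * C) * Z.toBlocks₁₁ * (A - B * D⁻¹ * C) = A - B * D⁻¹ * C :=
  calc (A - B * D⁻¹ * C) * Z.toBlocks₁₁ * (A - B * D⁻¹ * C)
      = fromCols (A - B * D⁻¹ * C) (0 : Matrix l n R) * Z *
          fromRows (A - B * D⁻¹ * C) (0 : Matrix n m R) :=
        (fromCols_zero_mul_mul_fromRows_zero _ _ _).symm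
    _ = fromCols (1 : Matrix l l R) (-(B * D⁻¹)) * (fromBlocks A B C D * Z * fromBlocks A B C D) *
          fromRows (1 : Matrix m m R) (-(D⁻¹ * C)) := by
        rw [← fromCols_one_neg_mul_fromBlocks hD, ← fromBlocks_mul_fromRows_one_neg hD]
        simp only [Matrix.mul_assoc]
    _ = A - B * D⁻¹ * C := by
        rw [hZ, fromCols_one_neg_mul_fromBlocks hD, fromCols_mul_fromRows]
        simp

end Matrix

theorem submatrix_sumCompl_eq_fromBlocks_blk (M : Matrix V V ℝ) (T : Set V)
    [DecidablePred (· ∈ T)] :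
    M.submatrix (Equiv.sumCompl (· ∈ T)) (Equiv.sumCompl (· ∈ T)) =
      fromBlocks (blk M (· ∈ T) (· ∈ T)) (blk M (· ∈ T) (· ∉ T))
        (blk M (· ∉ T) (· ∈ T)) (blk M (· ∉ T) (· ∉ T)) := by
  ext (_ | _) (_ | _) <;> rfl

theorem SC_mul_blk_mul_SC [Fintype V] [DecidableEq V] {M Z : Matrix V V ℝ} {T : Set V}
    [DecidablePred (· ∈ T)] (hD : IsUnit (blk M (· ∉ T) (· ∉ T)).det) (hZ : M * Z * M = M) :
    SC M T * blk Z (· ∈ T) (· ∈ T) * SC M T = SC M T := by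
  set e := Equiv.sumCompl (· ∈ T)
  have hZe : M.submatrix e e * Z.submatrix e e * M.submatrix e e = M.submatrix e e := by
    rw [submatrix_mul_equiv, submatrix_mul_equiv, hZ]
  rw [submatrix_sumCompl_eq_fromBlocks_blk] at hZe
  exact (schur_mul_toBlocks₁₁_mul_schur hD hZe :)

theorem schur_complement_pseudoinverse_identity_general [Fintype V] [DecidableEq V]
    (w : V → V → ℝ)
    (T : Set V) [DecidablePred (· ∈ T)]
    (hSS : (blk (lap w) (fun v => v ∉ T) (fun v => v ∉ T)).PosDef)
    (Z : Matrix V V ℝ)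
    (hZ1 : lap w * Z * lap w = lap w) :
    SC (lap w) T * blk Z (· ∈ T) (· ∈ T) * SC (lap w) T = SC (lap w) T :=
  SC_mul_blk_mul_SC hSS.det_pos.ne'.isUnit hZ1

theorem schur_complement_pseudoinverse_identity [Fintype V] [DecidableEq V]
    (w : V → V → ℝ) (hw_symm : ∀ u v, w u v = w v u) (hw_nonneg : ∀ u v, 0 ≤ w u v)
    (hw_diag : ∀ u, w u u = 0)
    (hconn : (SimpleGraph.fromRel fun u v => 0 < w u v).Connected)
    (T : Set V) [DecidablePred (· ∈ T)] (hT_ne : T.Nonempty) (hT_proper : T ≠ Set.univ)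
    (hSS : (blk (lap w) (fun v => v ∉ T) (fun v => v ∉ T)).PosDef)
    (Z : Matrix V V ℝ)
    (hZ1 : lap w * Z * lap w = lap w) (hZ2 : Z * lap w * Z = Z)
    (hZ3 : (lap w * Z)ᵀ = lap w * Z) (hZ4 : (Z * lap w)ᵀ = Z * lap w) :
    SC (lap w) T * blk Z (· ∈ T) (· ∈ T) * SC (lap w) T = SC (lap w) T :=
  schur_complement_pseudoinverse_identity_general w T hSS Z hZ1
end

section
/- Let G be a weighted graph on a finite vertex set V with Laplacian L, let T be a nonempty proper subset of V with complement S = V ∖ T, and assume L_{SS} is positive definite. Then the Schur complement SC(L,T) is again a weighted graph Laplacian on T: it is symmetric, its off-diagonal entries are nonpositive, each of its rows sums to zero (SC(L,T)·𝟙 = 0, where 𝟙 is the all-ones vector on T), and it is positive semidefinite. -/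
open Matrix

variable {V : Type*}

/-!
A symmetric matrix `M` with nonpositive off-diagonal entries and zero row sums is positive
semidefinite, because `∑ i, ∑ j, M i j (x i - x j)² = -2 xᵀ M x`; so it suffices that the Schur
complement keeps these three properties. Eliminating the `S`-coordinates from `L 𝟙 = 0` gives
`SC(L,T) 𝟙 = 0`. Since `L_SS` is positive definite with nonpositive off-diagonal entries, its
inverse is entrywise nonnegative (pair `A x ≥ 0` with the negative part of `x`); as `L_TS` and
`L_ST` are entrywise nonpositive, the correction `L_TS L_SS⁻¹ L_ST` is entrywise nonnegative and
can only decrease the off-diagonal entries of `L_TT`.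
-/

namespace Matrix

variable {n R : Type*} [Fintype n] [CommRing R] [LinearOrder R]

theorem PosDef.nonneg_of_mulVec_nonneg [IsStrictOrderedRing R] [StarRing R] [TrivialStar R]
    {A : Matrix n n R} (hA : A.PosDef) (hoff : ∀ i j, i ≠ j → A i j ≤ 0) {x : n → R}
    (hAx : ∀ i, 0 ≤ (A *ᵥ x) i) (i : n) : 0 ≤ x i := by
  have hdisj : ∀ k, (x k)⁻ * (x k)⁺ = 0 := fun k => by
    rcases le_total (x k) 0 with h | h
    · rw [posPart_eq_zero.mpr h, mul_zero]
    · rw [negPart_eq_zero.mpr h, zero_mul]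
  have hpos : x⁻ ⬝ᵥ A *ᵥ x⁺ ≤ 0 := by
    refine Finset.sum_nonpos fun j _ => ?_
    rw [mulVec, dotProduct, Finset.mul_sum]
    refine Finset.sum_nonpos fun k _ => ?_
    rcases eq_or_ne j k with rfl | hjk
    · simp only [Pi.negPart_apply, Pi.posPart_apply]
      linear_combination A j j * hdisj j
    · exact mul_nonpos_of_nonneg_of_nonpos (negPart_nonneg _)
        (mul_nonpos_of_nonpos_of_nonneg (hoff j k hjk) (posPart_nonneg _))
  have hneg : 0 ≤ x⁻ ⬝ᵥ A *ᵥ x :=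
    Finset.sum_nonneg fun j _ => mul_nonneg (negPart_nonneg _) (hAx j)
  have hsplit : x⁻ = x⁺ - x := by linear_combination -posPart_sub_negPart x
  have hquad : x⁻ ⬝ᵥ A *ᵥ x⁻ = x⁻ ⬝ᵥ A *ᵥ x⁺ - x⁻ ⬝ᵥ A *ᵥ x := by
    rw [← dotProduct_sub, ← mulVec_sub, ← hsplit]
  have hzero : x⁻ = 0 := by
    by_contra hne
    have := hA.dotProduct_mulVec_pos hne
    rw [star_trivial] at this
    linarith
  simpa [hzero] using congrFun (posPart_sub_negPart x) i

theorem PosDef.inv_apply_nonneg {K : Type*} [Field K] [LinearOrder K] [IsStrictOrderedRing K]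
    [StarRing K] [TrivialStar K] [DecidableEq n] {A : Matrix n n K} (hA : A.PosDef)
    (hoff : ∀ i j, i ≠ j → A i j ≤ 0) (i j : n) : 0 ≤ A⁻¹ i j := by
  have hAx : A *ᵥ (A⁻¹ *ᵥ Pi.single j 1) = Pi.single j 1 := by
    have hdet : IsUnit A.det := (isUnit_iff_isUnit_det A).mp hA.isUnit
    rw [mulVec_mulVec, mul_nonsing_inv _ hdet, one_mulVec]
  have hx := hA.nonneg_of_mulVec_nonneg hoff (x := A⁻¹ *ᵥ Pi.single j 1)
    (fun k => by rw [hAx, Pi.single_apply]; split_ifs <;> norm_num) i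
  simpa [mulVec_single_one] using hx

/-- These are exactly the Laplacians of weighted graphs, with weights `w i j = -M i j`. -/
structure IsLaplacian (M : Matrix n n R) : Prop where
  isSymm : M.IsSymm
  apply_nonpos_of_ne : ∀ i j, i ≠ j → M i j ≤ 0
  mulVec_one : M *ᵥ (fun _ => 1) = 0

namespace IsLaplacian

variable {M : Matrix n n R}

theorem sum_apply_eq_zero (hM : M.IsLaplacian) (i : n) : ∑ j, M i j = 0 := by
  simpa [mulVec, dotProduct] using congrFun hM.mulVec_one i

theorem sum_mul_sub_sq_eq (hM : M.IsLaplacian) (x : n → R) :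
    ∑ i, ∑ j, M i j * (x i - x j) ^ 2 = -2 * (x ⬝ᵥ M *ᵥ x) := by
  have hrow : ∑ i, ∑ j, M i j * x i ^ 2 = 0 := by
    simp_rw [← Finset.sum_mul, hM.sum_apply_eq_zero, zero_mul, Finset.sum_const_zero]
  have hcol : ∑ i, ∑ j, M i j * x j ^ 2 = 0 := by
    rw [Finset.sum_comm]
    simp_rw [hM.isSymm.apply, ← Finset.sum_mul, hM.sum_apply_eq_zero, zero_mul,
      Finset.sum_const_zero]
  have hquad : x ⬝ᵥ M *ᵥ x = ∑ i, ∑ j, M i j * (x i * x j) := by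
    simp_rw [dotProduct, mulVec, dotProduct, Finset.mul_sum]
    exact Finset.sum_congr rfl fun i _ => Finset.sum_congr rfl fun j _ => by ring
  have hexpand : ∀ i j, M i j * (x i - x j) ^ 2
      = M i j * x i ^ 2 + M i j * x j ^ 2 - 2 * (M i j * (x i * x j)) := fun i j => by ring
  simp_rw [hexpand, Finset.sum_sub_distrib, Finset.sum_add_distrib, ← Finset.mul_sum]
  rw [hrow, hcol, hquad]
  ring

theorem posSemidef [IsStrictOrderedRing R] [StarRing R] [TrivialStar R] (hM : M.IsLaplacian) :
    M.PosSemidef := by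
  refine .of_dotProduct_mulVec_nonneg (isHermitian_iff_isSymm.mpr hM.isSymm) fun x => ?_
  have hsum : ∑ i, ∑ j, M i j * (x i - x j) ^ 2 ≤ 0 := by
    refine Finset.sum_nonpos fun i _ => Finset.sum_nonpos fun j _ => ?_
    rcases eq_or_ne i j with rfl | hij
    · simp
    · exact mul_nonpos_of_nonpos_of_nonneg (hM.apply_nonpos_of_ne i j hij) (sq_nonneg _)
  rw [star_trivial]
  linarith [hM.sum_mul_sub_sq_eq x]

end IsLaplacian

end Matrix

theorem blk_transpose (M : Matrix V V ℝ) (P Q : V → Prop) : (blk M P Q)ᵀ = blk Mᵀ Q P := rfl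

theorem mulVec_apply_eq_blk_add [Fintype V] (M : Matrix V V ℝ) (T : Set V)
    [DecidablePred (· ∈ T)] {P : V → Prop} (x : V → ℝ) (u : {v // P v}) :
    (M *ᵥ x) u = (blk M P (· ∈ T) *ᵥ fun t => x t) u + (blk M P (· ∉ T) *ᵥ fun s => x s) u :=
  (Fintype.sum_subtype_add_sum_subtype (· ∈ T) _).symm

section SchurComplement

variable [Fintype V] [DecidableEq V] {M : Matrix V V ℝ} {T : Set V} [DecidablePred (· ∈ T)]

theorem SC_isSymm (hM : M.IsSymm) : (SC M T).IsSymm := by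
  simp only [IsSymm, SC, transpose_sub, transpose_mul, transpose_nonsing_inv, blk_transpose,
    hM.eq, Matrix.mul_assoc]

theorem SC_apply_nonpos_of_ne (hoff : ∀ u v, u ≠ v → M u v ≤ 0)
    (hS : (blk M (· ∉ T) (· ∉ T)).PosDef) {u v : {v // v ∈ T}} (huv : u ≠ v) :
    SC M T u v ≤ 0 := by
  have hD : ∀ a b, 0 ≤ (blk M (· ∉ T) (· ∉ T))⁻¹ a b :=
    hS.inv_apply_nonneg fun a b hab => hoff a b (Subtype.coe_ne_coe.mpr hab)
  have hcross : ∀ (t : {v // v ∈ T}) (s : {v // v ∉ T}), M t s ≤ 0 ∧ M s t ≤ 0 := fun t s =>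
    have hts : (t : V) ≠ s := fun h => s.2 (h ▸ t.2)
    ⟨hoff _ _ hts, hoff _ _ hts.symm⟩
  have hcorr : 0 ≤ (blk M (· ∈ T) (· ∉ T) * (blk M (· ∉ T) (· ∉ T))⁻¹ *
      blk M (· ∉ T) (· ∈ T)) u v := by
    refine Finset.sum_nonneg fun b _ => mul_nonneg_of_nonpos_of_nonpos ?_ (hcross v b).2
    exact Finset.sum_nonpos fun a _ => mul_nonpos_of_nonpos_of_nonneg (hcross u a).1 (hD a b)
  have hA : M u v ≤ 0 := hoff u v (Subtype.coe_ne_coe.mpr huv)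
  simp only [SC, Matrix.sub_apply]
  exact sub_nonpos_of_le (hA.trans hcorr)

theorem SC_mulVec_eq_zero_of_mulVec_eq_zero (hS : IsUnit (blk M (· ∉ T) (· ∉ T)).det) {x : V → ℝ}
    (hx : M *ᵥ x = 0) : SC M T *ᵥ (fun t => x t) = 0 := by
  set xT : {v // v ∈ T} → ℝ := fun t => x t
  set xS : {v // v ∉ T} → ℝ := fun s => x s
  have hrowT : blk M (· ∈ T) (· ∈ T) *ᵥ xT + blk M (· ∈ T) (· ∉ T) *ᵥ xS = 0 := funext fun t => by
    rw [Pi.add_apply, ← mulVec_apply_eq_blk_add, hx]; rfl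
  have hrowS : blk M (· ∉ T) (· ∈ T) *ᵥ xT + blk M (· ∉ T) (· ∉ T) *ᵥ xS = 0 := funext fun s => by
    rw [Pi.add_apply, ← mulVec_apply_eq_blk_add, hx]; rfl
  have hsolve : (blk M (· ∉ T) (· ∉ T))⁻¹ *ᵥ (blk M (· ∉ T) (· ∈ T) *ᵥ xT) = -xS := by
    rw [eq_neg_of_add_eq_zero_left hrowS, mulVec_neg, mulVec_mulVec, nonsing_inv_mul _ hS,
      one_mulVec]
  rw [SC, sub_mulVec, Matrix.mul_assoc, ← mulVec_mulVec, ← mulVec_mulVec, hsolve, mulVec_neg,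
    sub_neg_eq_add, hrowT]

theorem isLaplacian_SC (hM : M.IsLaplacian) (hS : (blk M (· ∉ T) (· ∉ T)).PosDef) :
    (SC M T).IsLaplacian where
  isSymm := SC_isSymm hM.isSymm
  apply_nonpos_of_ne _ _ := SC_apply_nonpos_of_ne hM.apply_nonpos_of_ne hS
  mulVec_one :=
    SC_mulVec_eq_zero_of_mulVec_eq_zero ((isUnit_iff_isUnit_det _).mp hS.isUnit) hM.mulVec_one

end SchurComplement

section Laplacian

variable [Fintype V] [DecidableEq V] {w : V → V → ℝ}

theorem isLaplacian_lap (hw_symm : ∀ u v, w u v = w v u) (hw_nonneg : ∀ u v, 0 ≤ w u v)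
    (hw_diag : ∀ u, w u u = 0) : (lap w).IsLaplacian where
  isSymm := by
    rw [lap_eq_diagonal_sub hw_diag, IsSymm, transpose_sub, diagonal_transpose]
    congr 1
    ext u v
    exact hw_symm v u
  apply_nonpos_of_ne u v huv := by
    simpa [lap, huv] using hw_nonneg u v
  mulVec_one := by
    rw [lap_eq_diagonal_sub hw_diag, sub_mulVec, sub_eq_zero]
    funext u
    rw [mulVec_diagonal]
    simp [mulVec, dotProduct]

end Laplacian

theorem schur_complement_is_laplacian_general [Fintype V] [DecidableEq V]
    (w : V → V → ℝ) (hw_symm : ∀ u v, w u v = w v u) (hw_nonneg : ∀ u v, 0 ≤ w u v)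
    (hw_diag : ∀ u, w u u = 0)
    (T : Set V) [DecidablePred (· ∈ T)]
    (hSS : (blk (lap w) (fun v => v ∉ T) (fun v => v ∉ T)).PosDef) :
    (SC (lap w) T).IsSymm ∧
    (∀ u v : {v // v ∈ T}, u ≠ v → SC (lap w) T u v ≤ 0) ∧
    (SC (lap w) T).mulVec (fun _ => 1) = 0 ∧
    (SC (lap w) T).PosSemidef := by
  have h := isLaplacian_SC (isLaplacian_lap hw_symm hw_nonneg hw_diag) hSS
  exact ⟨h.isSymm, h.apply_nonpos_of_ne, h.mulVec_one, h.posSemidef⟩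

theorem schur_complement_is_laplacian [Fintype V] [DecidableEq V]
    (w : V → V → ℝ) (hw_symm : ∀ u v, w u v = w v u) (hw_nonneg : ∀ u v, 0 ≤ w u v)
    (hw_diag : ∀ u, w u u = 0)
    (T : Set V) [DecidablePred (· ∈ T)] (hT_ne : T.Nonempty) (hT_proper : T ≠ Set.univ)
    (hSS : (blk (lap w) (fun v => v ∉ T) (fun v => v ∉ T)).PosDef) :
    (SC (lap w) T).IsSymm ∧
    (∀ u v : {v // v ∈ T}, u ≠ v → SC (lap w) T u v ≤ 0) ∧
    (SC (lap w) T).mulVec (fun _ => 1) = 0 ∧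
    (SC (lap w) T).PosSemidef :=
  schur_complement_is_laplacian_general w hw_symm hw_nonneg hw_diag T hSS
end
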